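/- arXiv:2501.11731 — 3 statements merged into one kernel-verified Lean document; each statement's English description precedes it below -/
import Mathlib

section
/- Fix n ≥ 1 and a prime power q, and for 1 ≤ i < j ≤ n let J_{i,j} = {(k,l) : 1 ≤ k < l ≤ n, and either k > i, or k = i and l ≥ j}. Let H = U_{J_{i,j}} and let H' = U_{J'} where J' = J_{i,j} \ {(i,j)} (both J_{i,j} and J' are closed, and U_∅ is the trivial group). Then q^{-1} ≤ k(H)/k(H') ≤ q^3; that is, k(H') ≤ q·k(H) and k(H) ≤ q^3·k(H'). -/
/-- The pattern set: `n×n` matrices over `F` with ones on the diagonal, zeros below the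
diagonal, and zeros in every above-diagonal position outside `J`. -/
def patternSet (n : ℕ) (F : Type) [Field F] (J : Set (Fin n × Fin n)) :
    Set (Matrix (Fin n) (Fin n) F) :=
  {u | (∀ i, u i i = 1) ∧ (∀ i j : Fin n, j < i → u i j = 0) ∧
    (∀ i j : Fin n, i < j → (i, j) ∉ J → u i j = 0)}

/-- The set `J_{i,j} = {(k,l) : k < l, and either k > i, or k = i and l ≥ j}`. -/
def Jset (n : ℕ) (i j : Fin n) : Set (Fin n × Fin n) :=
  {p | p.1 < p.2 ∧ (i < p.1 ∨ (p.1 = i ∧ j ≤ p.2))}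

/-!
Within `J_{i,j}`, row `i` vanishes strictly between the diagonal and column `j`, so the
`(i, j)` entry is a homomorphism from `H` to `(F, +)` with kernel `H'`; hence `[H : H'] ≤ q`.
For a subgroup `K` of index `m` in a finite group `G`, the number of commuting pairs of `G`
is `k(G)·|G|`. Since `K × K ⊆ G × G`, this gives `k(K) ≤ m·k(G)`; since
`|C_G(g)| ≤ m·|C_K(g)|`, counting the pairs in `G × G`, `G × K` and `K × K` gives
`k(G) ≤ m·k(K)`.
-/

namespace Subgroup

variable {G : Type*} [Group G]

theorem card_le_index_mul_card_inf (K L : Subgroup G) [K.FiniteIndex] :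
    Nat.card L ≤ K.index * Nat.card ↥(K ⊓ L) := by
  have h := relIndex_inf_mul_relIndex ⊥ K L
  rw [bot_inf_eq, relIndex_bot_left, relIndex_bot_left] at h
  rw [← h, mul_comm, ← relIndex_top_right]
  gcongr
  exact relIndex_le_of_le_right le_top (K.relIndex_top_right ▸ FiniteIndex.index_ne_zero)

theorem card_commute_le_index_mul [Finite G] (K : Subgroup G) {α : Type*} [Finite α]
    (f : α → G) :
    Nat.card {p : α × G // Commute (f p.1) p.2} ≤
      K.index * Nat.card {p : α × K // Commute (f p.1) p.2} := by
  have := Fintype.ofFinite α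
  rw [Nat.card_congr (Equiv.subtypeProdEquivSigmaSubtype fun a (h : G) => Commute (f a) h),
    Nat.card_congr (Equiv.subtypeProdEquivSigmaSubtype fun a (k : K) => Commute (f a) k),
    Nat.card_sigma, Nat.card_sigma, Finset.mul_sum]
  refine Finset.sum_le_sum fun a _ => ?_
  have hC : ∀ h : G, Commute (f a) h ↔ h ∈ centralizer {f a} := fun h => by
    rw [mem_centralizer_singleton_iff]; exact eq_comm
  have eG : {h : G // Commute (f a) h} ≃ centralizer {f a} := Equiv.subtypeEquivRight hC
  have eK : {k : K // Commute (f a) k} ≃ ↥(K ⊓ centralizer {f a}) :=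
    (Equiv.subtypeSubtypeEquivSubtypeInter (· ∈ K) (Commute (f a))).trans
      (Equiv.subtypeEquivRight fun h => by rw [hC]; rfl)
  rw [Nat.card_congr eG, Nat.card_congr eK]
  exact card_le_index_mul_card_inf K _

theorem card_conjClasses_le_index_mul_subgroup [Finite G] (K : Subgroup G) :
    Nat.card (ConjClasses G) ≤ K.index * Nat.card (ConjClasses K) := by
  have hpairs : Nat.card {p : G × G // Commute p.1 p.2} ≤
      K.index ^ 2 * Nat.card {p : K × K // Commute p.1 p.2} := calc
    _ ≤ K.index * Nat.card {p : G × K // Commute p.1 (p.2 : G)} :=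
      card_commute_le_index_mul K id
    _ = K.index * Nat.card {p : K × G // Commute (p.1 : G) p.2} := by
      congr 1
      exact Nat.card_congr ((Equiv.prodComm G K).subtypeEquiv fun _ => Commute.symm_iff)
    _ ≤ K.index * (K.index * Nat.card {p : K × K // Commute (p.1 : G) p.2}) := by
      gcongr; exact card_commute_le_index_mul K Subtype.val
    _ = K.index ^ 2 * Nat.card {p : K × K // Commute p.1 p.2} := by
      simp only [Submonoid.commute_coe_coe]; ring
  rw [card_comm_eq_card_conjClasses_mul_card, card_comm_eq_card_conjClasses_mul_card,
    ← K.card_mul_index] at hpairs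
  have hK : 0 < Nat.card K * K.index :=
    Nat.mul_pos Nat.card_pos (Nat.pos_of_ne_zero K.index_ne_zero_of_finite)
  exact Nat.le_of_mul_le_mul_right (by linarith) hK

theorem card_conjClasses_subgroup_le_index_mul [Finite G] (K : Subgroup G) :
    Nat.card (ConjClasses K) ≤ K.index * Nat.card (ConjClasses G) := by
  have hpairs :
      Nat.card {p : K × K // Commute p.1 p.2} ≤ Nat.card {p : G × G // Commute p.1 p.2} :=
    Nat.card_le_card_of_injective (fun p => ⟨(p.1.1, p.1.2), congrArg Subtype.val p.2⟩)
      fun p q h => by simpa only [Subtype.ext_iff, Prod.ext_iff] using h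
  rw [card_comm_eq_card_conjClasses_mul_card, card_comm_eq_card_conjClasses_mul_card,
    ← K.card_mul_index] at hpairs
  exact Nat.le_of_mul_le_mul_right (c := Nat.card K) (by linarith) Nat.card_pos

end Subgroup

theorem MulEquiv.card_conjClasses_eq {A B : Type*} [Group A] [Group B] (e : A ≃* B) :
    Nat.card (ConjClasses A) = Nat.card (ConjClasses B) :=
  Nat.card_congr <| Quotient.congr e.toEquiv fun a b => by
    change IsConj a b ↔ IsConj (e a) (e b)
    exact ⟨e.toMonoidHom.map_isConj, fun h => by simpa using e.symm.toMonoidHom.map_isConj h⟩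

section PatternGroup

variable {n : ℕ} {F : Type} [Field F]

theorem patternSet_mono {J J' : Set (Fin n × Fin n)} (h : J ⊆ J') :
    patternSet n F J ⊆ patternSet n F J' :=
  fun _ ⟨hdiag, hlow, hout⟩ => ⟨hdiag, hlow, fun k l hkl hl => hout k l hkl (mt (@h _) hl)⟩

theorem mem_patternSet_diff_singleton_iff {J : Set (Fin n × Fin n)}
    {A : Matrix (Fin n) (Fin n) F} (hA : A ∈ patternSet n F J) {k l : Fin n} (hkl : k < l) :
    A ∈ patternSet n F (J \ {(k, l)}) ↔ A k l = 0 := by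
  obtain ⟨hdiag, hlow, hout⟩ := hA
  refine ⟨fun h => h.2.2 k l hkl fun h' => h'.2 rfl,
    fun h0 => ⟨hdiag, hlow, fun k' l' hkl' hJ => ?_⟩⟩
  by_cases hp : (k', l') = (k, l)
  · simp_all
  · exact hout k' l' hkl' fun h => hJ ⟨h, hp⟩

variable {i j : Fin n}

theorem mul_apply_of_mem_patternSet_Jset (hij : i < j) {A B : Matrix (Fin n) (Fin n) F}
    (hA : A ∈ patternSet n F (Jset n i j)) (hB : B ∈ patternSet n F (Jset n i j)) :
    (A * B) i j = A i j + B i j := by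
  obtain ⟨hAdiag, hAlow, hAout⟩ := hA
  obtain ⟨hBdiag, hBlow, -⟩ := hB
  rw [Matrix.mul_apply, Finset.sum_eq_add i j hij.ne, hAdiag, hBdiag, one_mul, mul_one, add_comm]
  · rintro k - ⟨hki, hkj⟩
    rcases lt_or_gt_of_ne hki with hk | hk
    · rw [hAlow i k hk, zero_mul]
    rcases lt_or_gt_of_ne hkj with hk' | hk'
    · rw [hAout i k hk fun h => h.2.elim (lt_irrefl i) fun h => (h.2.not_gt hk'), zero_mul]
    · rw [hBlow k j hk', mul_zero]
  all_goals simp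

variable [Fintype F]

theorem index_subgroupOf_le_card (hij : i < j) {H H' : Subgroup (GL (Fin n) F)}
    (hH : ∀ g : GL (Fin n) F, g ∈ H ↔
      (g : Matrix (Fin n) (Fin n) F) ∈ patternSet n F (Jset n i j))
    (hH' : ∀ g : GL (Fin n) F, g ∈ H' ↔
      (g : Matrix (Fin n) (Fin n) F) ∈ patternSet n F (Jset n i j \ {(i, j)})) :
    (H'.subgroupOf H).index ≤ Fintype.card F := by
  let entry : H →* Multiplicative F :=
    MonoidHom.mk' (fun u => Multiplicative.ofAdd (((u : GL (Fin n) F) : Matrix _ _ F) i j))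
      fun u v => by
        rw [← ofAdd_add, ← mul_apply_of_mem_patternSet_Jset hij ((hH u).1 u.2) ((hH v).1 v.2)]
        rfl
  have hker : entry.ker = H'.subgroupOf H := by
    ext u
    rw [MonoidHom.mem_ker, Subgroup.mem_subgroupOf, hH',
      mem_patternSet_diff_singleton_iff ((hH u).1 u.2) hij]
    rfl
  rw [← hker, Subgroup.index_ker]
  exact (Nat.card_le_card_of_injective _ Subtype.val_injective).trans_eq
    ((Nat.card_congr Multiplicative.toAdd).trans Nat.card_eq_fintype_card)

end PatternGroup

theorem conj_class_ratio_adjacent_pattern_groups_general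
    (n : ℕ) (F : Type) [Field F] [Fintype F]
    (i j : Fin n) (hij : i < j)
    (H H' : Subgroup (GL (Fin n) F))
    (hH : ∀ g : GL (Fin n) F, g ∈ H ↔
      (g : Matrix (Fin n) (Fin n) F) ∈ patternSet n F (Jset n i j))
    (hH' : ∀ g : GL (Fin n) F, g ∈ H' ↔
      (g : Matrix (Fin n) (Fin n) F) ∈ patternSet n F (Jset n i j \ {(i, j)})) :
    Nat.card (ConjClasses H') ≤ Fintype.card F * Nat.card (ConjClasses H) ∧
    Nat.card (ConjClasses H) ≤ (Fintype.card F) ^ 3 * Nat.card (ConjClasses H') := by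
  set K := H'.subgroupOf H
  have hle : H' ≤ H := fun g hg => (hH g).2 (patternSet_mono Set.sdiff_subset ((hH' g).1 hg))
  have hK : Nat.card (ConjClasses K) = Nat.card (ConjClasses H') :=
    (Subgroup.subgroupOfEquivOfLe hle).card_conjClasses_eq
  have hidx : K.index ≤ Fintype.card F := index_subgroupOf_le_card hij hH hH'
  constructor
  · calc Nat.card (ConjClasses H') = Nat.card (ConjClasses K) := hK.symm
      _ ≤ K.index * Nat.card (ConjClasses H) := K.card_conjClasses_subgroup_le_index_mul
      _ ≤ Fintype.card F * Nat.card (ConjClasses H) := by gcongr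
  · calc Nat.card (ConjClasses H) ≤ K.index * Nat.card (ConjClasses K) :=
          K.card_conjClasses_le_index_mul_subgroup
      _ ≤ Fintype.card F ^ 3 * Nat.card (ConjClasses H') := by
          rw [hK]; gcongr; exact hidx.trans (Nat.le_self_pow (by norm_num) _)

/-- Theorem 4.2: for the adjacent pattern groups `H = U_{J_{i,j}}` and
`H' = U_{J_{i,j} \ {(i,j)}}` in the nested chain, `q⁻¹ ≤ k(H)/k(H') ≤ q³`, i.e.
`k(H') ≤ q·k(H)` and `k(H) ≤ q³·k(H')`. -/
theorem conj_class_ratio_adjacent_pattern_groups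
    (n : ℕ) (hn : 1 ≤ n) (F : Type) [Field F] [Fintype F]
    (i j : Fin n) (hij : i < j)
    (H H' : Subgroup (GL (Fin n) F))
    (hH : ∀ g : GL (Fin n) F, g ∈ H ↔
      (g : Matrix (Fin n) (Fin n) F) ∈ patternSet n F (Jset n i j))
    (hH' : ∀ g : GL (Fin n) F, g ∈ H' ↔
      (g : Matrix (Fin n) (Fin n) F) ∈ patternSet n F (Jset n i j \ {(i, j)})) :
    Nat.card (ConjClasses H') ≤ Fintype.card F * Nat.card (ConjClasses H) ∧
    Nat.card (ConjClasses H) ≤ (Fintype.card F) ^ 3 * Nat.card (ConjClasses H') :=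
  conj_class_ratio_adjacent_pattern_groups_general n F i j hij H H' hH hH'
end

section
/- Let a finite group G act on a finite nonempty set X. For g ∈ G let X_g = {y ∈ X : y·g = y} and for x ∈ X let G_x = {h ∈ G : x·h = x}, and let O(x) denote the orbit of x. Define the Burnside process transition kernel K(x,y) = Σ_{g ∈ G_x ∩ G_y} 1/(|X_g|·|G_x|) and the probability distribution π(x) = z^{-1}/|O(x)| where z is the number of orbits. Then the kernel K is reversible with respect to π: for all x, y ∈ X, π(x)·K(x,y) = π(y)·K(y,x). -/
/-! By orbit–stabilizer, `|O(x)|·|G_x| = |G|`, so for `g ∈ G_x ∩ G_y` the `g`-th term of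
`π(x)·K(x,y)` is `z⁻¹ / (|X_g|·|G|)`, which no longer depends on `x`: the two sums agree
term by term. -/

open MulAction

theorem MulAction.natCard_orbit_mul_natCard_stabilizer {G X : Type*} [Group G] [MulAction G X]
    (x : X) : Nat.card (orbit G x) * Nat.card (stabilizer G x) = Nat.card G := by
  rw [Nat.card_coe_set_eq, ← index_stabilizer, mul_comm, Subgroup.card_mul_index]

theorem MulAction.div_natCard_orbit_mul_inv_mul_natCard_stabilizer {G X K : Type*} [Group G]
    [MulAction G X] [Field K] (a c : K) (x : X) :
    a / Nat.card (orbit G x) * (c * Nat.card (stabilizer G x))⁻¹ = a * (c * Nat.card G)⁻¹ := by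
  rw [← natCard_orbit_mul_natCard_stabilizer (G := G) x, Nat.cast_mul]
  ring

open scoped Classical in
theorem burnside_process_reversible_general
    {X G : Type*} [Group G] [Fintype G] [MulAction G X]
    (K : X → X → ℚ) (π : X → ℚ)
    (hK : ∀ x y : X, K x y = ∑ g : G,
      if g • x = x ∧ g • y = y then
        ((Nat.card (MulAction.fixedBy X g) : ℚ) * (Nat.card (MulAction.stabilizer G x) : ℚ))⁻¹
      else 0)
    (hπ : ∀ x : X, π x = ((Nat.card (MulAction.orbitRel.Quotient G X) : ℚ))⁻¹ /
      (Nat.card (MulAction.orbit G x) : ℚ))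
    (x y : X) :
    π x * K x y = π y * K y x := by
  rw [hπ, hπ, hK, hK, Finset.mul_sum, Finset.mul_sum]
  refine Finset.sum_congr rfl fun g _ => ?_
  simp only [mul_ite, mul_zero, div_natCard_orbit_mul_inv_mul_natCard_stabilizer, and_comm]

open scoped Classical in
theorem burnside_process_reversible
    {X G : Type*} [Fintype X] [Nonempty X] [Group G] [Fintype G] [MulAction G X]
    (K : X → X → ℚ) (π : X → ℚ)
    (hK : ∀ x y : X, K x y = ∑ g : G,
      if g • x = x ∧ g • y = y then
        ((Nat.card (MulAction.fixedBy X g) : ℚ) * (Nat.card (MulAction.stabilizer G x) : ℚ))⁻¹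
      else 0)
    (hπ : ∀ x : X, π x = ((Nat.card (MulAction.orbitRel.Quotient G X) : ℚ))⁻¹ /
      (Nat.card (MulAction.orbit G x) : ℚ))
    (x y : X) :
    π x * K x y = π y * K y x :=
  burnside_process_reversible_general K π hK hπ x y
end

section
/- Let a finite group G act on a finite nonempty set X. For g ∈ G let X_g = {y ∈ X : y·g = y} and for x ∈ X let G_x = {h ∈ G : x·h = x}. Define K(x,y) = Σ_{g ∈ G_x ∩ G_y} 1/(|X_g|·|G_x|). Then K is a stochastic matrix: for every x ∈ X, Σ_{y ∈ X} K(x,y) = 1. -/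
/-! Exchange the two sums: for `g ∈ G_x`, the `y` with `g ∈ G_y` are exactly the points of `X_g`,
so they contribute `|X_g| / (|X_g| |G_x|) = 1 / |G_x|`, and the `|G_x|` such `g` add up to `1`. -/

open MulAction

theorem Set.sum_ite_mem_inv_natCard_eq_one {α K : Type*} [Fintype α] [DivisionRing K] [CharZero K]
    (s : Set α) [DecidablePred (· ∈ s)] (hs : s.Nonempty) :
    ∑ a, (if a ∈ s then (Nat.card s : K)⁻¹ else 0) = 1 := by
  have hcard : (Finset.univ.filter (· ∈ s)).card = Nat.card s := by
    rw [Nat.card_eq_fintype_card, ← Set.toFinset_card]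
    congr 1
    ext a
    simp
  have hpos : (Nat.card s : K) ≠ 0 := by
    have := hs.to_subtype
    exact_mod_cast Nat.card_pos.ne'
  rw [← Finset.sum_filter, Finset.sum_const, nsmul_eq_mul, hcard, mul_inv_cancel₀ hpos]

open scoped Classical in
/-- The transition kernel of the Burnside process: from `x`, pick `g ∈ G_x` uniformly, then
`y ∈ X_g` uniformly. -/
noncomputable def burnsideKernel (G : Type*) {X : Type*} [Group G] [Fintype G] [MulAction G X]
    (x y : X) : ℚ :=
  ∑ g : G, if g • x = x ∧ g • y = y then
    ((Nat.card (fixedBy X g) : ℚ) * (Nat.card (stabilizer G x) : ℚ))⁻¹ else 0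

section

variable {X G : Type*} [Fintype X] [Group G] [MulAction G X]

open scoped Classical in
theorem sum_burnsideKernel_summand (x : X) (g : G) :
    (∑ y : X, if g • x = x ∧ g • y = y then
      ((Nat.card (fixedBy X g) : ℚ) * (Nat.card (stabilizer G x) : ℚ))⁻¹ else 0) =
      if g • x = x then (Nat.card (stabilizer G x) : ℚ)⁻¹ else 0 := by
  by_cases hg : g • x = x
  · calc (∑ y : X, if g • x = x ∧ g • y = y then
          ((Nat.card (fixedBy X g) : ℚ) * (Nat.card (stabilizer G x) : ℚ))⁻¹ else 0)
        = ∑ y : X, (Nat.card (stabilizer G x) : ℚ)⁻¹ *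
            if y ∈ fixedBy X g then (Nat.card (fixedBy X g) : ℚ)⁻¹ else 0 := by
          refine Finset.sum_congr rfl fun y _ => ?_
          simp only [hg, true_and, mem_fixedBy, mul_inv_rev]
          split_ifs <;> ring
      _ = if g • x = x then (Nat.card (stabilizer G x) : ℚ)⁻¹ else 0 := by
          rw [← Finset.mul_sum, (fixedBy X g).sum_ite_mem_inv_natCard_eq_one ⟨x, hg⟩, mul_one,
            if_pos hg]
  · simp [hg]

open scoped Classical in
theorem sum_burnsideKernel [Fintype G] (x : X) : ∑ y, burnsideKernel G x y = 1 := by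
  unfold burnsideKernel
  rw [Finset.sum_comm]
  simp only [sum_burnsideKernel_summand]
  exact (stabilizer G x : Set G).sum_ite_mem_inv_natCard_eq_one ⟨1, (stabilizer G x).one_mem⟩

end

open scoped Classical in
theorem burnside_process_stochastic_general
    {X G : Type*} [Fintype X] [Group G] [Fintype G] [MulAction G X]
    (K : X → X → ℚ)
    (hK : ∀ x y : X, K x y = ∑ g : G,
      if g • x = x ∧ g • y = y then
        ((Nat.card (MulAction.fixedBy X g) : ℚ) * (Nat.card (MulAction.stabilizer G x) : ℚ))⁻¹
      else 0)
    (x : X) :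
    ∑ y : X, K x y = 1 := by
  rw [show K = burnsideKernel G from funext₂ hK]
  exact sum_burnsideKernel x

open scoped Classical in
theorem burnside_process_stochastic
    {X G : Type*} [Fintype X] [Nonempty X] [Group G] [Fintype G] [MulAction G X]
    (K : X → X → ℚ)
    (hK : ∀ x y : X, K x y = ∑ g : G,
      if g • x = x ∧ g • y = y then
        ((Nat.card (MulAction.fixedBy X g) : ℚ) * (Nat.card (MulAction.stabilizer G x) : ℚ))⁻¹
      else 0)
    (x : X) :
    ∑ y : X, K x y = 1 :=
  burnside_process_stochastic_general K hK x
end
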